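/- Assume f = h + g with h ∈ S_{μ,L}^{1,1}(X) (0 ≤ μ ≤ L < ∞) and g convex on X. Let (λ_k, x_k, y_k, v_k) be generated by the corrected explicit scheme with x₀, v₀ ∈ X: y_k = (x_k + α_k v_k)/(1+α_k); λ̂_k = λ_k + (α_k/θ_k)(A v_k − b); v_{k+1} = argmin_{v ∈ X} { g(v) + ⟨Aᵀλ̂_k + ∇h_β(y_k), v⟩ + (τ_k/(2α_k))‖v − w_k‖² } where τ_k = γ_k + μ_β α_k and w_k = (γ_k v_k + μ_β α_k y_k)/τ_k; x_{k+1} = (x_k + α_k v_{k+1})/(1+α_k); λ_{k+1} = λ_k + (α_k/θ_k)(A v_{k+1} − b); θ_{k+1} = θ_k/(1+α_k), γ_{k+1} = (γ_k + μ_β α_k)/(1+α_k), θ₀ = 1, γ₀ > 0, with step sizes chosen so that (L_β + ‖A‖²)α_k² = γ_k θ_k. Define E_k = L_β(x_k, λ*) − L_β(x*, λ_k) + (γ_k/2)‖v_k − x*‖² + (θ_k/2)‖λ_k − λ*‖². Then x_k, y_k, v_k ∈ X for all k and E_{k+1} − E_k ≤ −α_k E_{k+1} for all k ∈ ℕ.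 -/

import Mathlib

open scoped RealInnerProductSpace Pointwise

/-- The smallest singular value of a linear map between Euclidean spaces. -/
noncomputable def sigmaMin {n m : ℕ}
    (A : EuclideanSpace ℝ (Fin n) →L[ℝ] EuclideanSpace ℝ (Fin m)) : ℝ :=
  sInf {c : ℝ | ∃ x : EuclideanSpace ℝ (Fin n), ‖x‖ = 1 ∧ ‖A x‖ = c}

/-- The convex subdifferential. -/
def subdiff {n : ℕ} (f : EuclideanSpace ℝ (Fin n) → ℝ)
    (x : EuclideanSpace ℝ (Fin n)) : Set (EuclideanSpace ℝ (Fin n)) :=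
  {p | ∀ y, f x + ⟪p, y - x⟫ ≤ f y}

/-- The normal cone of `X` at `x` (empty if `x ∉ X`). -/
def normalCone {n : ℕ} (X : Set (EuclideanSpace ℝ (Fin n)))
    (x : EuclideanSpace ℝ (Fin n)) : Set (EuclideanSpace ℝ (Fin n)) :=
  {p | x ∈ X ∧ ∀ z ∈ X, ⟪p, z - x⟫ ≤ 0}

open Set Filter Topology
open scoped InnerProduct

/-!
Write `H = h_β`, `G = ∇H(y_k)` and `τ_k = γ_k + μ_β α_k`. The inequality
`(1 + α_k) E_{k+1} ≤ E_k` is the sum of four estimates that fit together term by term: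
* `L_β`-smoothness of `H` at `y_k`, and its `μ_β`-strong convexity towards `x_k` and `x*`, bound
  `(1 + α_k) H(x_{k+1})`, because `(1 + α_k)(x_{k+1} - y_k) = α_k (v_{k+1} - v_k)`;
* the three-point inequality of the `τ_k / α_k`-strongly convex prox step, tested at `x*`, bounds
  `g(v_{k+1})` and produces `τ_k ‖v_{k+1} - x*‖² = (1 + α_k) γ_{k+1} ‖v_{k+1} - x*‖²`;
* the multiplier update is an exact identity for `θ_k ‖λ - λ*‖²`, in which the extrapolation `λ̂_k`
  leaves only `α_k² / (2 θ_k) ‖A (v_{k+1} - v_k)‖²`;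
* the leftover multiples of `‖v_{k+1} - v_k‖²` are absorbed by `γ_k / 2 ‖v_{k+1} - v_k‖²` thanks
  to the step-size rule and `θ_k ≤ 1 ≤ 1 + α_k`.
-/

theorem step_size_bound {α θ γ Lβ a : ℝ} (hα : 0 ≤ α) (hθ : 0 < θ) (hθα : θ ≤ 1 + α)
    (hLβ : 0 ≤ Lβ) (hstep : (Lβ + a) * α ^ 2 = γ * θ) :
    Lβ * α ^ 2 / (1 + α) + a * α ^ 2 / θ ≤ γ := by
  rw [div_add_div _ _ (by positivity) hθ.ne', div_le_iff₀ (by positivity)]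
  nlinarith [mul_le_mul_of_nonneg_left hθα (by positivity : 0 ≤ Lβ * α ^ 2)]

section InnerProductSpace

variable {E F : Type*} [NormedAddCommGroup E] [InnerProductSpace ℝ E]
  [NormedAddCommGroup F] [InnerProductSpace ℝ F]

theorem eq_smul_add_smul_of_one_add_smul_eq {a : ℝ} (ha : 0 ≤ a) {p q z : E}
    (hz : (1 + a) • z = p + a • q) : z = (1 + a)⁻¹ • p + ((1 + a)⁻¹ * a) • q := by
  have h1a : (1 + a) ≠ 0 := by positivity
  rw [mul_smul, ← smul_add, ← hz, smul_smul, inv_mul_cancel₀ h1a, one_smul]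

theorem Convex.mem_of_one_add_smul_eq {X : Set E} (hX : Convex ℝ X) {a : ℝ} (ha : 0 ≤ a)
    {p q z : E} (hp : p ∈ X) (hq : q ∈ X) (hz : (1 + a) • z = p + a • q) : z ∈ X := by
  rw [eq_smul_add_smul_of_one_add_smul_eq ha hz]
  exact hX hp hq (by positivity) (by positivity) (by field_simp)

theorem ConvexOn.one_add_mul_le_of_smul_eq {X : Set E} {g : E → ℝ} (hg : ConvexOn ℝ X g)
    {a : ℝ} (ha : 0 ≤ a) {p q z : E} (hp : p ∈ X) (hq : q ∈ X)
    (hz : (1 + a) • z = p + a • q) : (1 + a) * g z ≤ g p + a * g q := by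
  have h1a : (0 : ℝ) < 1 + a := by positivity
  have hconv := hg.2 hp hq (by positivity : (0 : ℝ) ≤ (1 + a)⁻¹)
    (by positivity : (0 : ℝ) ≤ (1 + a)⁻¹ * a) (by field_simp)
  rw [← eq_smul_add_smul_of_one_add_smul_eq ha hz, smul_eq_mul, smul_eq_mul] at hconv
  calc (1 + a) * g z ≤ (1 + a) * ((1 + a)⁻¹ * g p + (1 + a)⁻¹ * a * g q) := by gcongr
    _ = g p + a * g q := by field_simp

theorem sq_mul_norm_sub_of_smul_eq_add {p q : ℝ} {a b c z : E}
    (hz : (p + q) • z = p • a + q • b) :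
    (p + q) ^ 2 * ‖c - z‖ ^ 2
      = (p + q) * (p * ‖c - a‖ ^ 2 + q * ‖c - b‖ ^ 2) - p * q * ‖a - b‖ ^ 2 := by
  have hcz : (p + q) • (c - z) = p • (c - a) + q • (c - b) := by
    rw [smul_sub, hz]; module
  have hab : ‖a - b‖ ^ 2 = ‖c - a‖ ^ 2 + ‖c - b‖ ^ 2 - 2 * ⟪c - a, c - b⟫ := by
    rw [show a - b = (c - b) - (c - a) by abel, norm_sub_sq_real, real_inner_comm]
    ring
  have hn := congrArg (fun u : E => ‖u‖ ^ 2) hcz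
  simp only [norm_smul, mul_pow, Real.norm_eq_abs, sq_abs, norm_add_sq_real,
    real_inner_smul_left, real_inner_smul_right] at hn
  rw [hn, hab]
  ring

theorem IsMinOn.prox_three_point {X : Set E} {g : E → ℝ} (hg : ConvexOn ℝ X g) {c w p : E}
    {κ : ℝ} (hp : p ∈ X) (hmin : IsMinOn (fun u => g u + ⟪c, u⟫ + κ * ‖u - w‖ ^ 2) X p)
    {u : E} (hu : u ∈ X) :
    g p + ⟪c, p⟫ + κ * ‖p - w‖ ^ 2 + κ * ‖p - u‖ ^ 2 ≤ g u + ⟪c, u⟫ + κ * ‖u - w‖ ^ 2 := by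
  set Φ := fun u => g u + ⟪c, u⟫ + κ * ‖u - w‖ ^ 2 with hΦ
  have hsegment : ∀ t ∈ Ioo (0 : ℝ) 1, Φ p + κ * (1 - t) * ‖p - u‖ ^ 2 ≤ Φ u := by
    rintro t ⟨ht0, ht1⟩
    set z := (1 - t) • p + t • u with hz
    have hg_z : g z ≤ (1 - t) * g p + t * g u :=
      hg.2 hp hu (by linarith) ht0.le (by ring)
    have hc_z : ⟪c, z⟫ = (1 - t) * ⟪c, p⟫ + t * ⟪c, u⟫ := by
      rw [hz, inner_add_right, real_inner_smul_right, real_inner_smul_right]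
    have hnorm_z := sq_mul_norm_sub_of_smul_eq_add (c := w) (p := 1 - t) (q := t)
      (show (1 - t + t) • z = (1 - t) • p + t • u by rw [sub_add_cancel, one_smul])
    rw [norm_sub_rev w z, norm_sub_rev w p, norm_sub_rev w u, sub_add_cancel] at hnorm_z
    have hmin_z : Φ p ≤ Φ z := hmin (hg.1 hp hu (by linarith) ht0.le (by ring))
    simp only [hΦ] at hmin_z ⊢
    have hscaled : t * (g p + ⟪c, p⟫ + κ * ‖p - w‖ ^ 2 + κ * (1 - t) * ‖p - u‖ ^ 2)
        ≤ t * (g u + ⟪c, u⟫ + κ * ‖u - w‖ ^ 2) := by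
      linear_combination hmin_z + hg_z + hc_z + κ * hnorm_z
    exact le_of_mul_le_mul_left hscaled ht0
  have hlim : Tendsto (fun t => Φ p + κ * (1 - t) * ‖p - u‖ ^ 2) (𝓝[>] 0)
      (𝓝 (Φ p + κ * (1 - 0) * ‖p - u‖ ^ 2)) :=
    ((continuous_const.add ((continuous_const.mul (continuous_const.sub continuous_id)).mul
      continuous_const)).tendsto 0).mono_left nhdsWithin_le_nhds
  simpa using le_of_tendsto hlim (eventually_of_mem (Ioo_mem_nhdsGT one_pos) hsegment)

theorem dual_update_identity {α θ : ℝ} (hθ : θ ≠ 0) {lam lam' lamhat ls r r' : F}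
    (hlam' : lam' = lam + (α / θ) • r') (hlamhat : lamhat = lam + (α / θ) • r) :
    θ / 2 * ‖lam' - ls‖ ^ 2 - α * ⟪lamhat - ls, r'⟫
      = θ / 2 * ‖lam - ls‖ ^ 2 + α ^ 2 / (2 * θ) * (‖r' - r‖ ^ 2 - ‖r‖ ^ 2) := by
  have hsplit : ∀ s : F, lam + s - ls = (lam - ls) + s := fun s => by abel
  rw [hlam', hlamhat, hsplit, hsplit, norm_add_sq_real, norm_sub_sq_real r' r, inner_add_left,
    norm_smul, real_inner_smul_right, real_inner_smul_left, Real.norm_eq_abs, mul_pow, sq_abs,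
    real_inner_comm r]
  field_simp
  ring

theorem smooth_step_bound {H : E → ℝ} {G x y v v' x' xs : E} {α μβ Lβ : ℝ} (hα : 0 ≤ α)
    (hμβ : 0 ≤ μβ) (hy : (1 + α) • y = x + α • v) (hx' : (1 + α) • x' = x + α • v')
    (hsmooth : H x' ≤ H y + ⟪G, x' - y⟫ + Lβ / 2 * ‖x' - y‖ ^ 2)
    (hsc_x : H y + ⟪G, x - y⟫ + μβ / 2 * ‖x - y‖ ^ 2 ≤ H x)
    (hsc_xs : H y + ⟪G, xs - y⟫ + μβ / 2 * ‖xs - y‖ ^ 2 ≤ H xs) :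
    (1 + α) * H x' ≤ H x + α * (H xs + ⟪G, v' - xs⟫ - μβ / 2 * ‖xs - y‖ ^ 2)
      + Lβ / 2 * α ^ 2 / (1 + α) * ‖v' - v‖ ^ 2 := by
  have h1α : 0 < 1 + α := by linarith
  have hsplit : (1 + α) • (x' - y) = (x - y) + α • (v' - xs) + α • (xs - y) := by
    rw [smul_sub, hx']; module
  have hinner : (1 + α) * ⟪G, x' - y⟫ = ⟪G, x - y⟫ + α * ⟪G, v' - xs⟫ + α * ⟪G, xs - y⟫ := by
    rw [← real_inner_smul_right, hsplit, inner_add_right, inner_add_right,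
      real_inner_smul_right, real_inner_smul_right]
  have hnorm : (1 + α) * (Lβ / 2 * ‖x' - y‖ ^ 2) = Lβ / 2 * α ^ 2 / (1 + α) * ‖v' - v‖ ^ 2 := by
    have hdiff : (1 + α) • (x' - y) = α • (v' - v) := by rw [smul_sub, hx', hy]; module
    have hsq := congrArg (fun z => ‖z‖ ^ 2) hdiff
    simp only [norm_smul, mul_pow, Real.norm_eq_abs, sq_abs] at hsq
    field_simp
    linear_combination Lβ * hsq
  have hsmooth' := mul_le_mul_of_nonneg_left hsmooth h1α.le
  have hsc_xs' := mul_le_mul_of_nonneg_left hsc_xs hα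
  have hμx : 0 ≤ μβ / 2 * ‖x - y‖ ^ 2 := by positivity
  linarith

theorem prox_step_bound {X : Set E} {g : E → ℝ} (hg : ConvexOn ℝ X g) {c ws v y v' xs : E}
    {α γ μβ : ℝ} (hα : 0 < α) (hγ : 0 < γ) (hμβ : 0 ≤ μβ)
    (hws : (γ + μβ * α) • ws = γ • v + (μβ * α) • y) (hv' : v' ∈ X)
    (hmin : IsMinOn (fun u => g u + ⟪c, u⟫ + (γ + μβ * α) / (2 * α) * ‖u - ws‖ ^ 2) X v')
    (hxs : xs ∈ X) :
    α * g v' + α * ⟪c, v' - xs⟫ + (γ + μβ * α) / 2 * ‖v' - xs‖ ^ 2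
      ≤ α * g xs + γ / 2 * ‖v - xs‖ ^ 2 + μβ * α / 2 * ‖xs - y‖ ^ 2
        - γ / 2 * ‖v' - v‖ ^ 2 := by
  set τ := γ + μβ * α
  have hτ : 0 < τ := by positivity
  have hdiff : τ * (‖xs - ws‖ ^ 2 - ‖v' - ws‖ ^ 2)
      = γ * (‖v - xs‖ ^ 2 - ‖v' - v‖ ^ 2) + μβ * α * (‖xs - y‖ ^ 2 - ‖v' - y‖ ^ 2) := by
    have e_xs := sq_mul_norm_sub_of_smul_eq_add (c := xs) hws
    have e_v' := sq_mul_norm_sub_of_smul_eq_add (c := v') hws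
    rw [norm_sub_rev xs v] at e_xs
    exact mul_left_cancel₀ hτ.ne' (by linear_combination e_xs - e_v')
  have h3 := mul_le_mul_of_nonneg_left (hmin.prox_three_point hg hv' hxs) hα.le
  have hκ : α * (τ / (2 * α)) = τ / 2 := by field_simp
  have hy' : 0 ≤ μβ * α * ‖v' - y‖ ^ 2 := by positivity
  rw [inner_sub_right]
  linear_combination h3 + hdiff / 2 + hy' / 2
    - (‖v' - ws‖ ^ 2 + ‖v' - xs‖ ^ 2 - ‖xs - ws‖ ^ 2) * hκ

variable [CompleteSpace E] [CompleteSpace F]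

theorem descent_lemma {X : Set E} (hX : Convex ℝ X) {h : E → ℝ}
    {gradh : E → E} {L : ℝ} (hgrad : ∀ z ∈ X, HasGradientAt h (gradh z) z)
    (hlip : ∀ u ∈ X, ∀ w ∈ X, ⟪gradh u - gradh w, u - w⟫ ≤ L * ‖u - w‖ ^ 2)
    {u w : E} (hu : u ∈ X) (hw : w ∈ X) :
    h w ≤ h u + ⟪gradh u, w - u⟫ + L / 2 * ‖w - u‖ ^ 2 := by
  set d := w - u with hd
  have hseg : ∀ t ∈ Icc (0 : ℝ) 1, u + t • d ∈ X := fun t ht => hX.add_smul_sub_mem hu hw ht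
  set φ : ℝ → ℝ := fun t => h (u + t • d) - t * ⟪gradh u, d⟫ - L / 2 * ‖d‖ ^ 2 * t ^ 2
    with hφ
  have hφ' : ∀ t ∈ Icc (0 : ℝ) 1,
      HasDerivAt φ (⟪gradh (u + t • d) - gradh u, d⟫ - L * ‖d‖ ^ 2 * t) t := by
    intro t ht
    have hline : HasDerivAt (fun s : ℝ => u + s • d) d t := by
      simpa using ((hasDerivAt_id t).smul_const d).const_add u
    have hcomp : HasDerivAt (fun s => h (u + s • d)) ⟪gradh (u + t • d), d⟫ t :=
      (hgrad _ (hseg t ht)).hasFDerivAt.comp_hasDerivAt (f := fun s : ℝ => u + s • d) t hline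
    refine ((hcomp.sub ((hasDerivAt_id t).mul_const ⟪gradh u, d⟫)).sub
      ((hasDerivAt_pow 2 t).const_mul (L / 2 * ‖d‖ ^ 2))).congr_deriv ?_
    rw [inner_sub_left]
    simp only [Nat.cast_ofNat]
    ring
  have hanti : AntitoneOn φ (Icc 0 1) := by
    refine antitoneOn_of_hasDerivWithinAt_nonpos (convex_Icc 0 1)
      (fun t ht => (hφ' t ht).continuousAt.continuousWithinAt)
      (fun t ht => (hφ' t (interior_subset ht)).hasDerivWithinAt) ?_
    rw [interior_Icc]
    rintro t ⟨ht0, ht1⟩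
    have hmono := hlip _ (hseg t ⟨ht0.le, ht1.le⟩) u hu
    rw [add_sub_cancel_left, real_inner_smul_right, norm_smul, Real.norm_eq_abs, mul_pow,
      sq_abs] at hmono
    have : ⟪gradh (u + t • d) - gradh u, d⟫ ≤ L * ‖d‖ ^ 2 * t :=
      le_of_mul_le_mul_left (by linarith) ht0
    linarith
  have h01 := hanti (left_mem_Icc.2 zero_le_one) (right_mem_Icc.2 zero_le_one) zero_le_one
  simp only [hφ, one_smul, zero_smul, add_zero, one_mul, one_pow, mul_one, zero_mul,
    sub_zero, hd, add_sub_cancel] at h01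
  linarith

theorem norm_map_sub_sq_eq (A : E →L[ℝ] F) (b : F) (u w : E) :
    ‖A w - b‖ ^ 2 = ‖A u - b‖ ^ 2 + 2 * ⟪(A†) (A u - b), w - u⟫ + ‖A (w - u)‖ ^ 2 := by
  rw [show A w - b = (A u - b) + A (w - u) by rw [map_sub]; abel, norm_add_sq_real,
    ContinuousLinearMap.adjoint_inner_left]

theorem penalized_upper_bound {h : E → ℝ} {A : E →L[ℝ] F} {b : F} {β L : ℝ} (hβ : 0 ≤ β)
    {u w d : E} (hh : h w ≤ h u + ⟪d, w - u⟫ + L / 2 * ‖w - u‖ ^ 2) :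
    h w + β / 2 * ‖A w - b‖ ^ 2 ≤ h u + β / 2 * ‖A u - b‖ ^ 2
      + ⟪d + β • (A†) (A u - b), w - u⟫ + (L + β * ‖A‖ ^ 2) / 2 * ‖w - u‖ ^ 2 := by
  have hA : ‖A (w - u)‖ ^ 2 ≤ ‖A‖ ^ 2 * ‖w - u‖ ^ 2 := by
    rw [← mul_pow]; exact pow_le_pow_left₀ (norm_nonneg _) (A.le_opNorm _) 2
  rw [norm_map_sub_sq_eq A b u w, inner_add_left, real_inner_smul_left]
  nlinarith

theorem penalized_lower_bound {h : E → ℝ} {A : E →L[ℝ] F} {b : F} {β μ σ : ℝ} (hβ : 0 ≤ β)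
    (hσ0 : 0 ≤ σ) (hσ : ∀ z, σ * ‖z‖ ≤ ‖A z‖)
    {u w d : E} (hh : h u + ⟪d, w - u⟫ + μ / 2 * ‖w - u‖ ^ 2 ≤ h w) :
    h u + β / 2 * ‖A u - b‖ ^ 2 + ⟪d + β • (A†) (A u - b), w - u⟫
      + (μ + β * σ ^ 2) / 2 * ‖w - u‖ ^ 2 ≤ h w + β / 2 * ‖A w - b‖ ^ 2 := by
  have hA : σ ^ 2 * ‖w - u‖ ^ 2 ≤ ‖A (w - u)‖ ^ 2 := by
    rw [← mul_pow]; exact pow_le_pow_left₀ (by positivity) (hσ _) 2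
  rw [norm_map_sub_sq_eq A b u w, inner_add_left, real_inner_smul_left]
  nlinarith

/-- The energy `E_k` of the scheme; `L_β(x*, λ) = H x* + g x*` because `A x* = b`. -/
noncomputable def lyapunov (H g : E → ℝ) (A : E →L[ℝ] F) (b : F) (xs : E) (ls : F)
    (γ θ : ℝ) (x v : E) (lam : F) : ℝ :=
  H x + g x + ⟪ls, A x - b⟫ - (H xs + g xs) + γ / 2 * ‖v - xs‖ ^ 2 + θ / 2 * ‖lam - ls‖ ^ 2

theorem lyapunov_step {X : Set E} {H g : E → ℝ} (hg : ConvexOn ℝ X g) {A : E →L[ℝ] F} {b : F}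
    {xs : E} {ls : F} (hxs : xs ∈ X) (hAxs : A xs = b) {α θ γ μβ Lβ : ℝ} (hα : 0 < α)
    (hθ : 0 < θ) (hθα : θ ≤ 1 + α) (hγ : 0 < γ) (hμβ : 0 ≤ μβ) (hLβ : 0 ≤ Lβ)
    (hstep : (Lβ + ‖A‖ ^ 2) * α ^ 2 = γ * θ)
    {x y v v' x' ws G : E} {lam lam' lamhat : F} (hx : x ∈ X) (hv' : v' ∈ X)
    (hy : (1 + α) • y = x + α • v) (hx' : (1 + α) • x' = x + α • v')
    (hws : (γ + μβ * α) • ws = γ • v + (μβ * α) • y)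
    (hlamhat : lamhat = lam + (α / θ) • (A v - b))
    (hlam' : lam' = lam + (α / θ) • (A v' - b))
    (hsmooth : H x' ≤ H y + ⟪G, x' - y⟫ + Lβ / 2 * ‖x' - y‖ ^ 2)
    (hsc_x : H y + ⟪G, x - y⟫ + μβ / 2 * ‖x - y‖ ^ 2 ≤ H x)
    (hsc_xs : H y + ⟪G, xs - y⟫ + μβ / 2 * ‖xs - y‖ ^ 2 ≤ H xs)
    (hmin : IsMinOn (fun u => g u + ⟪(A†) lamhat + G, u⟫
      + (γ + μβ * α) / (2 * α) * ‖u - ws‖ ^ 2) X v') :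
    (1 + α) * lyapunov H g A b xs ls ((γ + μβ * α) / (1 + α)) (θ / (1 + α)) x' v' lam'
      ≤ lyapunov H g A b xs ls γ θ x v lam := by
  have h1α : 0 < 1 + α := by linarith
  have hH := smooth_step_bound hα.le hμβ hy hx' hsmooth hsc_x hsc_xs
  have hprox := prox_step_bound hg hα hγ hμβ hws hv' hmin hxs
  have hg_x' := hg.one_add_mul_le_of_smul_eq hα.le hx hv' hx'
  have hdual := dual_update_identity (ls := ls) hθ.ne' hlam' hlamhat
  have hc : ⟪(A†) lamhat + G, v' - xs⟫ = ⟪lamhat, A v' - b⟫ + ⟪G, v' - xs⟫ := by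
    rw [inner_add_left, ContinuousLinearMap.adjoint_inner_left, map_sub, hAxs]
  have hls : (1 + α) * ⟪ls, A x' - b⟫ = ⟪ls, A x - b⟫ + α * ⟪ls, A v' - b⟫ := by
    have e := congrArg (fun z => ⟪ls, A z⟫) hx'
    simp only [map_add, map_smul, inner_add_right, real_inner_smul_right] at e
    simp only [inner_sub_right]
    linear_combination e
  have hA : ‖A v' - b - (A v - b)‖ ^ 2 ≤ ‖A‖ ^ 2 * ‖v' - v‖ ^ 2 := by
    rw [sub_sub_sub_cancel_right, ← map_sub, ← mul_pow]
    exact pow_le_pow_left₀ (norm_nonneg _) (A.le_opNorm _) 2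
  have hsize := mul_le_mul_of_nonneg_right (step_size_bound hα.le hθ hθα hLβ hstep)
    (sq_nonneg ‖v' - v‖)
  have hA' := mul_le_mul_of_nonneg_left hA (by positivity : 0 ≤ α ^ 2 / (2 * θ))
  have hres : 0 ≤ α ^ 2 / (2 * θ) * ‖A v - b‖ ^ 2 := by positivity
  have hscale : ∀ c N : ℝ, (1 + α) * (c / (1 + α) / 2 * N) = c / 2 * N := fun c N => by
    field_simp
  rw [inner_sub_left] at hdual
  rw [hc] at hprox
  simp only [lyapunov, mul_add, mul_sub, hscale]
  linear_combination hH + hg_x' + hls + hprox + hdual + hsize / 2 + hA' + hres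

end InnerProductSpace

theorem pos_le_one_of_eq_div_one_add {θ α : ℕ → ℝ} (hα : ∀ k, 0 ≤ α k) (h0 : θ 0 = 1)
    (hsucc : ∀ k, θ (k + 1) = θ k / (1 + α k)) (k : ℕ) : 0 < θ k ∧ θ k ≤ 1 := by
  induction k with
  | zero => simp [h0]
  | succ k ih =>
    have h1 : 1 ≤ 1 + α k := by linarith [hα k]
    rw [hsucc]
    exact ⟨div_pos ih.1 (by linarith), div_le_one_of_le₀ (ih.2.trans h1) (by linarith)⟩

theorem pos_of_eq_add_mul_div_one_add {γ α : ℕ → ℝ} {μ : ℝ} (hα : ∀ k, 0 ≤ α k) (hμ : 0 ≤ μ)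
    (h0 : 0 < γ 0) (hsucc : ∀ k, γ (k + 1) = (γ k + μ * α k) / (1 + α k)) (k : ℕ) : 0 < γ k := by
  induction k with
  | zero => exact h0
  | succ k ih =>
    have := hα k
    rw [hsucc]
    positivity

theorem sigmaMin_nonneg {n m : ℕ} (A : EuclideanSpace ℝ (Fin n) →L[ℝ] EuclideanSpace ℝ (Fin m)) :
    0 ≤ sigmaMin A :=
  Real.sInf_nonneg (by rintro c ⟨x, -, rfl⟩; positivity)

theorem sigmaMin_mul_norm_le {n m : ℕ}
    (A : EuclideanSpace ℝ (Fin n) →L[ℝ] EuclideanSpace ℝ (Fin m)) (z : EuclideanSpace ℝ (Fin n)) :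
    sigmaMin A * ‖z‖ ≤ ‖A z‖ := by
  rcases eq_or_ne z 0 with rfl | hz
  · simp
  have hz' : 0 < ‖z‖ := norm_pos_iff.mpr hz
  have hunit : ‖(‖z‖⁻¹ • z)‖ = 1 := by
    rw [norm_smul, norm_inv, norm_norm, inv_mul_cancel₀ hz'.ne']
  have hle : sigmaMin A ≤ ‖z‖⁻¹ * ‖A z‖ := by
    refine csInf_le ⟨0, by rintro c ⟨x, -, rfl⟩; positivity⟩ ⟨_, hunit, ?_⟩
    rw [map_smul, norm_smul, norm_inv, norm_norm]
  calc sigmaMin A * ‖z‖ ≤ ‖z‖⁻¹ * ‖A z‖ * ‖z‖ := by gcongr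
    _ = ‖A z‖ := by field_simp

theorem corrected_explicit_contraction_general {n m : ℕ}
    (X : Set (EuclideanSpace ℝ (Fin n)))
    (hXcv : Convex ℝ X)
    (h g : EuclideanSpace ℝ (Fin n) → ℝ)
    (gradh : EuclideanSpace ℝ (Fin n) → EuclideanSpace ℝ (Fin n))
    (A : EuclideanSpace ℝ (Fin n) →L[ℝ] EuclideanSpace ℝ (Fin m))
    (b : EuclideanSpace ℝ (Fin m))
    (μ L β μβ Lβc : ℝ)
    (hμ : 0 ≤ μ) (hμL : μ ≤ L) (hβ : 0 ≤ β)
    (hμβ : μβ = μ + β * sigmaMin A ^ 2)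
    (hLβc : Lβc = L + β * ‖A‖ ^ 2)
    (hgrad : ∀ z, HasGradientAt h (gradh z) z)
    (hhsc : ∀ u ∈ X, ∀ w ∈ X,
      h u + ⟪gradh u, w - u⟫ + μ / 2 * ‖w - u‖ ^ 2 ≤ h w)
    (hhlip : ∀ u ∈ X, ∀ w ∈ X, ⟪gradh u - gradh w, u - w⟫ ≤ L * ‖u - w‖ ^ 2)
    (hgcv : ConvexOn ℝ Set.univ g)
    (Lβ : EuclideanSpace ℝ (Fin n) → EuclideanSpace ℝ (Fin m) → ℝ)
    (hLβ : ∀ z w, Lβ z w = h z + β / 2 * ‖A z - b‖ ^ 2 + g z + ⟪w, A z - b⟫)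
    (xs : EuclideanSpace ℝ (Fin n)) (ls : EuclideanSpace ℝ (Fin m))
    (hxs : xs ∈ X) (hKKT1 : A xs = b)
    (θ γ α : ℕ → ℝ)
    (hα : ∀ k, 0 < α k) (hθ0 : θ 0 = 1) (hγ0 : 0 < γ 0)
    (hθ : ∀ k, θ (k + 1) = θ k / (1 + α k))
    (hγ : ∀ k, γ (k + 1) = (γ k + μβ * α k) / (1 + α k))
    (hstep : ∀ k, (Lβc + ‖A‖ ^ 2) * α k ^ 2 = γ k * θ k)
    (lam : ℕ → EuclideanSpace ℝ (Fin m))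
    (x y v ws : ℕ → EuclideanSpace ℝ (Fin n))
    (hx0 : x 0 ∈ X) (hv0 : v 0 ∈ X)
    (hy : ∀ k, (1 + α k) • y k = x k + α k • v k)
    (hws : ∀ k, (γ k + μβ * α k) • ws k = γ k • v k + (μβ * α k) • y k)
    (lamhat : ℕ → EuclideanSpace ℝ (Fin m))
    (hlamhat : ∀ k, lamhat k = lam k + (α k / θ k) • (A (v k) - b))
    (hvmin : ∀ k, v (k + 1) ∈ X ∧ ∀ u ∈ X,
      g (v (k + 1)) +
        ⟪(ContinuousLinearMap.adjoint A) (lamhat k) + gradh (y k)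
          + β • (ContinuousLinearMap.adjoint A) (A (y k) - b), v (k + 1)⟫ +
        (γ k + μβ * α k) / (2 * α k) * ‖v (k + 1) - ws k‖ ^ 2 ≤
      g u +
        ⟪(ContinuousLinearMap.adjoint A) (lamhat k) + gradh (y k)
          + β • (ContinuousLinearMap.adjoint A) (A (y k) - b), u⟫ +
        (γ k + μβ * α k) / (2 * α k) * ‖u - ws k‖ ^ 2)
    (hx : ∀ k, (1 + α k) • x (k + 1) = x k + α k • v (k + 1))
    (hlam : ∀ k, lam (k + 1) = lam k + (α k / θ k) • (A (v (k + 1)) - b))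
    (Ef : ℕ → ℝ)
    (hEf : ∀ k, Ef k = Lβ (x k) ls - Lβ xs (lam k)
      + γ k / 2 * ‖v k - xs‖ ^ 2 + θ k / 2 * ‖lam k - ls‖ ^ 2) :
    (∀ k, x k ∈ X ∧ y k ∈ X ∧ v k ∈ X) ∧
      ∀ k, Ef (k + 1) - Ef k ≤ -(α k * Ef (k + 1)) := by
  have hμβ0 : 0 ≤ μβ := hμβ ▸ by positivity
  have hLβc0 : 0 ≤ Lβc := hLβc ▸ add_nonneg (hμ.trans hμL) (by positivity)
  have hθk := pos_le_one_of_eq_div_one_add (fun k => (hα k).le) hθ0 hθ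
  have hγk := pos_of_eq_add_mul_div_one_add (fun k => (hα k).le) hμβ0 hγ0 hγ
  have hxv : ∀ k, x k ∈ X ∧ v k ∈ X := fun k => by
    induction k with
    | zero => exact ⟨hx0, hv0⟩
    | succ k ih =>
      exact ⟨hXcv.mem_of_one_add_smul_eq (hα k).le ih.1 (hvmin k).1 (hx k), (hvmin k).1⟩
  have hyX : ∀ k, y k ∈ X := fun k =>
    hXcv.mem_of_one_add_smul_eq (hα k).le (hxv k).1 (hxv k).2 (hy k)
  set H : EuclideanSpace ℝ (Fin n) → ℝ := fun z => h z + β / 2 * ‖A z - b‖ ^ 2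
  have hE : ∀ k, Ef k = lyapunov H g A b xs ls (γ k) (θ k) (x k) (v k) (lam k) := fun k => by
    simp [hEf, hLβ, lyapunov, hKKT1, H]
  have hsc : ∀ u ∈ X, ∀ w ∈ X, H u + ⟪gradh u + β • (A†) (A u - b), w - u⟫
      + μβ / 2 * ‖w - u‖ ^ 2 ≤ H w := fun u hu w hw => hμβ ▸
    penalized_lower_bound hβ (sigmaMin_nonneg A) (sigmaMin_mul_norm_le A) (hhsc u hu w hw)
  refine ⟨fun k => ⟨(hxv k).1, hyX k, (hxv k).2⟩, fun k => ?_⟩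
  have hdecay := lyapunov_step (H := H) (ls := ls) (hgcv.subset (subset_univ X) hXcv) hxs
    hKKT1 (hα k) (hθk k).1 (by linarith [(hθk k).2, hα k]) (hγk k) hμβ0 hLβc0 (hstep k) (hxv k).1
    (hvmin k).1 (hy k) (hx k) (hws k) (hlamhat k) (hlam k)
    (hLβc ▸ penalized_upper_bound hβ
      (descent_lemma hXcv (fun z _ => hgrad z) hhlip (hyX k) (hxv (k + 1)).1))
    (hsc _ (hyX k) _ (hxv k).1) (hsc _ (hyX k) _ hxs)
    (isMinOn_iff.2 (by simpa only [add_assoc] using (hvmin k).2))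
  rw [← hγ k, ← hθ k, ← hE, ← hE] at hdecay
  linarith

/-- Theorem 6.1 (contraction part): the corrected explicit forward-backward scheme (6.1)
with step size `(L_β + ‖A‖²) α_k² = γ_k θ_k` keeps iterates in `X` and the Lyapunov
function contracts. -/
theorem corrected_explicit_contraction {n m : ℕ}
    (X : Set (EuclideanSpace ℝ (Fin n)))
    (hXne : X.Nonempty) (hXcl : IsClosed X) (hXcv : Convex ℝ X)
    (h g : EuclideanSpace ℝ (Fin n) → ℝ)
    (gradh : EuclideanSpace ℝ (Fin n) → EuclideanSpace ℝ (Fin n))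
    (A : EuclideanSpace ℝ (Fin n) →L[ℝ] EuclideanSpace ℝ (Fin m))
    (b : EuclideanSpace ℝ (Fin m))
    (μ L β μβ Lβc : ℝ)
    (hμ : 0 ≤ μ) (hμL : μ ≤ L) (hβ : 0 ≤ β)
    (hμβ : μβ = μ + β * sigmaMin A ^ 2)
    (hLβc : Lβc = L + β * ‖A‖ ^ 2)
    (hgrad : ∀ z, HasGradientAt h (gradh z) z)
    (hhsc : ∀ u ∈ X, ∀ w ∈ X,
      h u + ⟪gradh u, w - u⟫ + μ / 2 * ‖w - u‖ ^ 2 ≤ h w)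
    (hhlip : ∀ u ∈ X, ∀ w ∈ X, ⟪gradh u - gradh w, u - w⟫ ≤ L * ‖u - w‖ ^ 2)
    (hgcv : ConvexOn ℝ Set.univ g)
    (Lβ : EuclideanSpace ℝ (Fin n) → EuclideanSpace ℝ (Fin m) → ℝ)
    (hLβ : ∀ z w, Lβ z w = h z + β / 2 * ‖A z - b‖ ^ 2 + g z + ⟪w, A z - b⟫)
    (xs : EuclideanSpace ℝ (Fin n)) (ls : EuclideanSpace ℝ (Fin m))
    (hxs : xs ∈ X) (hKKT1 : A xs = b)
    (hKKT2 : ∃ p ∈ subdiff (fun z => h z + g z) xs, ∃ q ∈ normalCone X xs,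
      p + q + (ContinuousLinearMap.adjoint A) ls = 0)
    (θ γ α : ℕ → ℝ)
    (hα : ∀ k, 0 < α k) (hθ0 : θ 0 = 1) (hγ0 : 0 < γ 0)
    (hθ : ∀ k, θ (k + 1) = θ k / (1 + α k))
    (hγ : ∀ k, γ (k + 1) = (γ k + μβ * α k) / (1 + α k))
    (hstep : ∀ k, (Lβc + ‖A‖ ^ 2) * α k ^ 2 = γ k * θ k)
    (lam : ℕ → EuclideanSpace ℝ (Fin m))
    (x y v ws : ℕ → EuclideanSpace ℝ (Fin n))
    (hx0 : x 0 ∈ X) (hv0 : v 0 ∈ X)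
    (hy : ∀ k, (1 + α k) • y k = x k + α k • v k)
    (hws : ∀ k, (γ k + μβ * α k) • ws k = γ k • v k + (μβ * α k) • y k)
    (lamhat : ℕ → EuclideanSpace ℝ (Fin m))
    (hlamhat : ∀ k, lamhat k = lam k + (α k / θ k) • (A (v k) - b))
    (hvmin : ∀ k, v (k + 1) ∈ X ∧ ∀ u ∈ X,
      g (v (k + 1)) +
        ⟪(ContinuousLinearMap.adjoint A) (lamhat k) + gradh (y k)
          + β • (ContinuousLinearMap.adjoint A) (A (y k) - b), v (k + 1)⟫ +
        (γ k + μβ * α k) / (2 * α k) * ‖v (k + 1) - ws k‖ ^ 2 ≤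
      g u +
        ⟪(ContinuousLinearMap.adjoint A) (lamhat k) + gradh (y k)
          + β • (ContinuousLinearMap.adjoint A) (A (y k) - b), u⟫ +
        (γ k + μβ * α k) / (2 * α k) * ‖u - ws k‖ ^ 2)
    (hx : ∀ k, (1 + α k) • x (k + 1) = x k + α k • v (k + 1))
    (hlam : ∀ k, lam (k + 1) = lam k + (α k / θ k) • (A (v (k + 1)) - b))
    (Ef : ℕ → ℝ)
    (hEf : ∀ k, Ef k = Lβ (x k) ls - Lβ xs (lam k)
      + γ k / 2 * ‖v k - xs‖ ^ 2 + θ k / 2 * ‖lam k - ls‖ ^ 2) :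
    (∀ k, x k ∈ X ∧ y k ∈ X ∧ v k ∈ X) ∧
      ∀ k, Ef (k + 1) - Ef k ≤ -(α k * Ef (k + 1)) :=
  corrected_explicit_contraction_general X hXcv h g gradh A b μ L β μβ Lβc hμ hμL hβ hμβ hLβc hgrad
    hhsc hhlip hgcv Lβ hLβ xs ls hxs hKKT1 θ γ α hα hθ0 hγ0 hθ hγ hstep lam x y v ws hx0 hv0 hy hws
    lamhat hlamhat hvmin hx hlam Ef hEf
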